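/- arXiv:2301.10303 — 5 statements merged into one kernel-verified Lean document; each statement's English description precedes it below -/
import Mathlib

section
/- Assume the Dickson–Hardy–Littlewood conjecture. Then there exists an infinite set B of prime numbers such that b + b' + 1 is prime for every pair of distinct elements b, b' of B. -/
/-- A tuple `(h 0, …, h (k-1))` of natural numbers is *prime-producing* if there are
infinitely many `n` such that `n + h i` is prime for all `i`. -/
def PrimeProducing {k : ℕ} (h : Fin k → ℕ) : Prop :=
  {n : ℕ | ∀ i, Nat.Prime (n + h i)}.Infinite

/-- A tuple is *admissible* if for every prime `p` it avoids at least one residue class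
mod `p`. -/
def AdmissibleTuple {k : ℕ} (h : Fin k → ℕ) : Prop :=
  ∀ p : ℕ, p.Prime → ∃ r : ℕ, r < p ∧ ∀ i, h i % p ≠ r

/-- The Dickson–Hardy–Littlewood conjecture: every admissible tuple is prime-producing. -/
def DicksonHardyLittlewood : Prop :=
  ∀ (k : ℕ) (h : Fin k → ℕ), AdmissibleTuple h → PrimeProducing h

/-- A finite set of primes (all ≥ 5) with all pairwise sums plus 1 prime, and growing so
fast that any element exceeds the sum (plus one) of any two smaller elements. -/
def GoodSet (s : Finset ℕ) : Prop :=
  (∀ b ∈ s, Nat.Prime b ∧ 5 ≤ b) ∧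
  (∀ b ∈ s, ∀ b' ∈ s, b ≠ b' → Nat.Prime (b + b' + 1)) ∧
  (∀ x ∈ s, ∀ y ∈ s, ∀ z ∈ s, x < z → y < z → x + y + 1 < z)

/-- The prime tuple associated to a good set: `(1, b₁+2, …, b_k+2)`. -/
noncomputable def goodTuple (s : Finset ℕ) : Fin (s.card + 1) → ℕ :=
  Fin.cons 1 (fun i => ((s.equivFin.symm i : ℕ) + 2))

lemma goodTuple_zero (s : Finset ℕ) : goodTuple s 0 = 1 := rfl

lemma goodTuple_succ (s : Finset ℕ) (i : Fin s.card) :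
    goodTuple s i.succ = (s.equivFin.symm i : ℕ) + 2 := by
  simp [goodTuple]

lemma goodTuple_mem (s : Finset ℕ) (i : Fin s.card) :
    (s.equivFin.symm i : ℕ) ∈ s := (s.equivFin.symm i).2

lemma goodTuple_surj (s : Finset ℕ) (b : ℕ) (hb : b ∈ s) :
    ∃ i : Fin s.card, goodTuple s i.succ = b + 2 := by
  refine ⟨s.equivFin ⟨b, hb⟩, ?_⟩
  rw [goodTuple_succ, Equiv.symm_apply_apply]

lemma goodTuple_admissible (s : Finset ℕ) (hs : GoodSet s) :
    AdmissibleTuple (goodTuple s) := by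
  obtain ⟨h1, h2, h3⟩ := hs
  intro p hp
  by_cases hps : p ∈ s
  · -- `p` is one of the elements; then `p ≥ 5`
    have hp5 : 5 ≤ p := (h1 p hps).2
    haveI : Fact p.Prime := ⟨hp⟩
    haveI : NeZero p := ⟨hp.pos.ne'⟩
    set T : Finset (ZMod p) := (s.erase p).image (Nat.cast : ℕ → ZMod p) with hT
    have hnz : ∀ b ∈ s.erase p, (b : ZMod p) ≠ 0 := by
      intro b hb h0
      have hdvd : p ∣ b := (ZMod.natCast_eq_zero_iff b p).mp h0
      have := (Nat.prime_dvd_prime_iff_eq hp (h1 b (Finset.mem_erase.mp hb).2).1).mp hdvd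
      exact (Finset.mem_erase.mp hb).1 this.symm
    -- two distinct elements of `s \ {p}` cannot sum to `-1` mod `p`
    have hsum : ∀ b ∈ s.erase p, ∀ b' ∈ s.erase p, b ≠ b' →
        (b : ZMod p) + (b' : ZMod p) ≠ -1 := by
      intro b hb b' hb' hne heq
      obtain ⟨hbp, hbs⟩ := Finset.mem_erase.mp hb
      obtain ⟨hbp', hbs'⟩ := Finset.mem_erase.mp hb'
      have hq : Nat.Prime (b + b' + 1) := h2 b hbs b' hbs' hne
      have h0 : ((b + b' + 1 : ℕ) : ZMod p) = 0 := by push_cast; rw [heq]; ring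
      have hdvd : p ∣ b + b' + 1 := (ZMod.natCast_eq_zero_iff _ p).mp h0
      have hpq : p = b + b' + 1 := (Nat.prime_dvd_prime_iff_eq hp hq).mp hdvd
      rcases lt_trichotomy b p with hlt | he | hgt
      · rcases lt_trichotomy b' p with hlt' | he' | hgt'
        · have := h3 b hbs b' hbs' p hps hlt hlt'
          omega
        · exact hbp' he'
        · omega
      · exact hbp he
      · omega
    have hp2 : ((2 : ℕ) : ZMod p) ≠ 0 := by
      intro h0
      have hd := (ZMod.natCast_eq_zero_iff 2 p).mp h0
      have := Nat.le_of_dvd (by norm_num) hd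
      omega
    have hp3 : ((3 : ℕ) : ZMod p) ≠ 0 := by
      intro h0
      have hd := (ZMod.natCast_eq_zero_iff 3 p).mp h0
      have := Nat.le_of_dvd (by norm_num) hd
      omega
    have key : ∃ s₀ : ZMod p, s₀ ∉ T ∧ s₀ ≠ 0 ∧ s₀ ≠ -1 := by
      by_cases h1T : (1 : ZMod p) ∈ T
      · by_cases h2T : (-2 : ZMod p) ∈ T
        · exfalso
          obtain ⟨b, hb, hbe⟩ := Finset.mem_image.mp h1T
          obtain ⟨b', hb', hbe'⟩ := Finset.mem_image.mp h2T
          have hne : b ≠ b' := by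
            intro h
            rw [h, hbe'] at hbe
            apply hp3
            push_cast
            linear_combination -hbe
          refine hsum b hb b' hb' hne ?_
          rw [hbe, hbe']; ring
        · refine ⟨-2, h2T, ?_, ?_⟩
          · intro h; apply hp2; push_cast; linear_combination -h
          · intro h
            apply (ZMod.natCast_eq_zero_iff 1 p).not.mpr
              (by simpa using hp.one_lt.ne')
            push_cast
            linear_combination -h
      · refine ⟨1, h1T, one_ne_zero, ?_⟩
        intro h; apply hp2; push_cast; linear_combination h
    obtain ⟨s₀, hs₀T, hs₀0, hs₀1⟩ := key
    refine ⟨(s₀ + 2).val, ZMod.val_lt _, ?_⟩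
    intro i hmod
    have hcast : ((goodTuple s i : ℕ) : ZMod p) = s₀ + 2 := by
      calc ((goodTuple s i : ℕ) : ZMod p) = ((goodTuple s i % p : ℕ) : ZMod p) :=
            (ZMod.natCast_mod _ p).symm
        _ = (((s₀ + 2).val : ℕ) : ZMod p) := by rw [hmod]
        _ = s₀ + 2 := by simp [ZMod.natCast_val]
    revert hcast
    refine Fin.cases ?_ ?_ i
    · intro hcast
      rw [goodTuple_zero] at hcast
      apply hs₀1
      push_cast at hcast
      linear_combination -hcast
    · intro j hcast
      rw [goodTuple_succ] at hcast
      set b := (s.equivFin.symm j : ℕ) with hbdef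
      have hbs : b ∈ s := goodTuple_mem s j
      by_cases hbp : b = p
      · apply hs₀0
        rw [hbp] at hcast
        push_cast at hcast
        rw [ZMod.natCast_self] at hcast
        linear_combination -hcast
      · apply hs₀T
        have hbs₀ : (b : ZMod p) = s₀ := by push_cast at hcast; linear_combination hcast
        exact Finset.mem_image.mpr ⟨b, Finset.mem_erase.mpr ⟨hbp, hbs⟩, hbs₀⟩
  · -- `p ∉ s` : residue `2 % p` is avoided
    refine ⟨2 % p, Nat.mod_lt _ hp.pos, ?_⟩
    intro i
    refine Fin.cases ?_ ?_ i
    · rw [goodTuple_zero]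
      intro h
      have hd : p ∣ 2 - 1 := (Nat.modEq_iff_dvd' (by norm_num)).mp h
      have := Nat.le_of_dvd (by norm_num) hd
      have := hp.two_le
      omega
    · intro j h
      rw [goodTuple_succ] at h
      set b := (s.equivFin.symm j : ℕ) with hbdef
      have hbs : b ∈ s := goodTuple_mem s j
      have hd : p ∣ (b + 2) - 2 := (Nat.modEq_iff_dvd' (by omega)).mp h.symm
      simp only [Nat.add_sub_cancel] at hd
      have hb : Nat.Prime b := (h1 b hbs).1
      exact hps (by rw [(Nat.prime_dvd_prime_iff_eq hp hb).mp hd]; exact hbs)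

lemma goodSet_empty : GoodSet ∅ := by
  refine ⟨?_, ?_, ?_⟩ <;> simp

lemma goodSet_extend (hDHL : DicksonHardyLittlewood) (s : Finset ℕ) (hs : GoodSet s) :
    ∃ b, b ∉ s ∧ (∀ x ∈ s, x < b) ∧ GoodSet (insert b s) := by
  have hinf := hDHL _ _ (goodTuple_admissible s hs)
  set M := s.sup id with hM
  obtain ⟨n, hn, hnM⟩ := hinf.exists_gt (2 * M + 3)
  have hprime : ∀ i, Nat.Prime (n + goodTuple s i) := hn
  have hle : ∀ x ∈ s, x ≤ M := fun x hx => Finset.le_sup (f := id) hx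
  have hb : Nat.Prime (n + 1) := by
    have := hprime 0
    rwa [goodTuple_zero] at this
  have hpair : ∀ x ∈ s, Nat.Prime (n + 1 + x + 1) := by
    intro x hx
    obtain ⟨i, hi⟩ := goodTuple_surj s x hx
    have := hprime i.succ
    rw [hi, show n + (x + 2) = n + 1 + x + 1 by ring] at this
    exact this
  refine ⟨n + 1, ?_, ?_, ?_, ?_, ?_⟩
  · intro h
    have := hle _ h
    omega
  · intro x hx
    have := hle x hx
    omega
  · intro c hc
    rcases Finset.mem_insert.mp hc with rfl | hc
    · exact ⟨hb, by omega⟩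
    · exact hs.1 c hc
  · intro x hx y hy hxy
    rcases Finset.mem_insert.mp hx with rfl | hx
    · rcases Finset.mem_insert.mp hy with rfl | hy
      · exact absurd rfl hxy
      · exact hpair y hy
    · rcases Finset.mem_insert.mp hy with rfl | hy
      · have := hpair x hx
        rwa [show n + 1 + x + 1 = x + (n + 1) + 1 by ring] at this
      · exact hs.2.1 x hx y hy hxy
  · intro x hx y hy z hz hxz hyz
    rcases Finset.mem_insert.mp hz with rfl | hz
    · have hxs : x ∈ s := by
        rcases Finset.mem_insert.mp hx with rfl | h
        · omega
        · exact h
      have hys : y ∈ s := by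
        rcases Finset.mem_insert.mp hy with rfl | h
        · omega
        · exact h
      have := hle x hxs
      have := hle y hys
      omega
    · have hzM := hle z hz
      have hxs : x ∈ s := by
        rcases Finset.mem_insert.mp hx with rfl | h
        · omega
        · exact h
      have hys : y ∈ s := by
        rcases Finset.mem_insert.mp hy with rfl | h
        · omega
        · exact h
      exact hs.2.2 x hxs y hys z hz hxz hyz

/-- Assuming the Dickson–Hardy–Littlewood conjecture, there exists an infinite set `B` of
primes such that `b + b' + 1` is prime for every pair of distinct `b, b' ∈ B`. -/
theorem infinite_restricted_sumset_in_shifted_primes (hDHL : DicksonHardyLittlewood) :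
    ∃ B : Set ℕ, B.Infinite ∧ (∀ b ∈ B, Nat.Prime b) ∧
      ∀ b ∈ B, ∀ b' ∈ B, b ≠ b' → Nat.Prime (b + b' + 1) := by
  choose f hf1 hf2 hf3 using goodSet_extend hDHL
  let F : ℕ → {s : Finset ℕ // GoodSet s} := fun k =>
    Nat.rec ⟨∅, goodSet_empty⟩ (fun _ p => ⟨insert (f p.1 p.2) p.1, hf3 p.1 p.2⟩) k
  set g : ℕ → ℕ := fun k => f (F k).1 (F k).2 with hg
  have hFsucc : ∀ k, (F (k + 1)).1 = insert (g k) (F k).1 := fun k => rfl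
  have hmono : ∀ k m, k ≤ m → (F k).1 ⊆ (F m).1 := by
    intro k m hkm
    induction m, hkm using Nat.le_induction with
    | base => exact subset_rfl
    | succ m hkm ih =>
        refine ih.trans ?_
        rw [hFsucc]
        exact Finset.subset_insert _ _
  have hgmem : ∀ k m, k < m → g k ∈ (F m).1 := by
    intro k m hkm
    apply hmono (k + 1) m hkm
    rw [hFsucc]
    exact Finset.mem_insert_self _ _
  have hsm : StrictMono g := strictMono_nat_of_lt_succ ?_
  case _ =>
    refine ⟨Set.range g, Set.infinite_range_of_injective hsm.injective, ?_, ?_⟩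
    · rintro b ⟨k, rfl⟩
      exact ((F (k + 1)).2.1 _ (hgmem k (k + 1) (by omega))).1
    · rintro b ⟨k, rfl⟩ b' ⟨k', rfl⟩ hne
      have h1 : g k ∈ (F (max k k' + 1)).1 := hgmem k (max k k' + 1) (by omega)
      have h2 : g k' ∈ (F (max k k' + 1)).1 := hgmem k' (max k k' + 1) (by omega)
      exact (F (max k k' + 1)).2.2.1 _ h1 _ h2 hne
  case _ =>
    intro k
    exact hf2 (F (k + 1)).1 (F (k + 1)).2 _ (hgmem k (k + 1) (by omega))
end

section
/- Assume the Dickson–Hardy–Littlewood conjecture, and let k ≥ 1. Then any good k-tuple (p_1,…,p_k) can be extended to a good (k+1)-tuple (p_1,…,p_k,p_{k+1}) with p_{k+1} > p_k. -/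
/-- A *good* `k`-tuple: a strictly increasing tuple of primes, all greater than `3`,
such that `p i + p j + 1` is prime and `p i` does not divide `p j + 2` for all `i < j`. -/
def GoodTuple {k : ℕ} (p : Fin k → ℕ) : Prop :=
  StrictMono p ∧ (∀ i, Nat.Prime (p i) ∧ 3 < p i) ∧
    ∀ i j : Fin k, i < j → Nat.Prime (p i + p j + 1) ∧ ¬ (p i ∣ p j + 2)

theorem Nat.exists_modEq_forall_prime_le (a : ℕ → ℕ) (M : ℕ) :
    ∃ B, ∀ ℓ, ℓ.Prime → ℓ ≤ M → B ≡ a ℓ [MOD ℓ] := by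
  let t := (Finset.range (M + 1)).filter Nat.Prime
  have ht : ∀ ℓ ∈ t, ℓ.Prime := fun ℓ hℓ => (Finset.mem_filter.1 hℓ).2
  let B := Nat.chineseRemainderOfFinset a id t (fun ℓ hℓ => (ht ℓ hℓ).ne_zero)
    fun ℓ hℓ ℓ' hℓ' hne => (Nat.coprime_primes (ht ℓ hℓ) (ht ℓ' hℓ')).2 hne
  refine ⟨B, fun ℓ hℓ hle => B.2 ℓ ?_⟩
  simp only [t, Finset.mem_filter, Finset.mem_range]
  exact ⟨by omega, hℓ⟩

theorem admissibleTuple_of_forall_prime_le {n : ℕ} (h : Fin n → ℕ)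
    (H : ∀ ℓ, ℓ.Prime → ℓ ≤ n → ∃ r < ℓ, ∀ i, h i % ℓ ≠ r) : AdmissibleTuple h := by
  intro ℓ hℓ
  by_cases hle : ℓ ≤ n
  · exact H ℓ hℓ hle
  by_contra! hcover
  have hsurj : Function.Surjective fun i => (⟨h i % ℓ, Nat.mod_lt _ hℓ.pos⟩ : Fin ℓ) := by
    intro r
    obtain ⟨i, hi⟩ := hcover r r.2
    exact ⟨i, Fin.ext hi⟩
  have := Fintype.card_le_of_surjective _ hsurj
  simp only [Fintype.card_fin] at this
  omega

theorem Nat.not_dvd_add_two_of_prime_add {ℓ n B : ℕ} (hB : B % ℓ = 2) (hℓn : ℓ < n)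
    (hprime : (n + B).Prime) : ¬ ℓ ∣ n + 2 := by
  rintro ⟨c, hc⟩
  have hdvd : ℓ ∣ n + B := by
    have := Nat.mod_add_div B ℓ
    exact ⟨c + B / ℓ, by rw [mul_add]; omega⟩
  rcases (Nat.dvd_prime hprime).1 hdvd with rfl | rfl <;> omega

def extensionShifts {k : ℕ} (p : Fin k → ℕ) (B : ℕ) : Fin (k + 2) → ℕ :=
  Fin.cons 0 (Fin.cons B fun i => p i + 1)

def IsGoodExtension {k : ℕ} (p : Fin k → ℕ) (q : ℕ) : Prop :=
  q.Prime ∧ 3 < q ∧ ∀ i, p i < q ∧ (p i + q + 1).Prime ∧ ¬ p i ∣ q + 2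

namespace GoodTuple

variable {k : ℕ} {p : Fin k → ℕ}

theorem prime (hp : GoodTuple p) (i : Fin k) : (p i).Prime := (hp.2.1 i).1

theorem five_le (hp : GoodTuple p) (i : Fin k) : 5 ≤ p i := by
  have := (hp.2.1 i).2
  exact (hp.prime i).five_le_of_ne_two_of_ne_three (by omega) (by omega)

theorem mod_three (hp : GoodTuple p) (i : Fin k) : p i % 3 = 1 ∨ p i % 3 = 2 := by
  have : ¬ 3 ∣ p i := fun h => by
    have := (Nat.prime_dvd_prime_iff_eq Nat.prime_three (hp.prime i)).1 h
    have := hp.five_le i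
    omega
  omega

theorem prime_add_add_one (hp : GoodTuple p) {i j : Fin k} (hij : i ≠ j) :
    (p i + p j + 1).Prime := by
  rcases hij.lt_or_gt with h | h
  · exact (hp.2.2 i j h).1
  · simpa only [add_comm (p i)] using (hp.2.2 j i h).1

theorem eq_add_two_of_dvd (hp : GoodTuple p) {t m : Fin k} (htm : t ≠ m)
    (h : p m ∣ p t + 2) : p t + 2 = p m := by
  have hlt : t < m :=
    htm.lt_or_gt.resolve_right fun hmt => (hp.2.2 m t hmt).2 h
  have := hp.1 hlt
  have := hp.five_le t
  exact Nat.eq_of_dvd_of_lt_two_mul (by omega) h (by omega)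

theorem mod_three_of_add_two_eq (hp : GoodTuple p) {t m : Fin k} (htwin : p t + 2 = p m) :
    p m % 3 = 1 ∧ ∀ j ≠ m, p j % 3 = 2 := by
  have hm : p m % 3 = 1 := by
    rcases hp.mod_three t with h | h <;> rcases hp.mod_three m with h' | h' <;> omega
  refine ⟨hm, fun j hjm => (hp.mod_three j).resolve_left fun hj => ?_⟩
  have h3 : 3 ∣ p j + p m + 1 := by omega
  have := (Nat.prime_dvd_prime_iff_eq Nat.prime_three (hp.prime_add_add_one hjm)).1 h3
  have := hp.five_le j
  omega

/-- Modulo `p m`, the residues `0`, `1`, `2` are taken by the shifts `0`, `p m + 1` and `B` of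
`extensionShifts p B`; this supplies a free residue for them. -/
theorem exists_avoided_residue (hp : GoodTuple p) (m : Fin k) :
    ∃ r, 3 ≤ r ∧ r < p m ∧ ∀ j ≠ m, (p j + 1) % p m ≠ r := by
  have h5 := hp.five_le m
  by_cases htwin : ∃ t ≠ m, p m ∣ p t + 2
  · obtain ⟨t, htm, hdvd⟩ := htwin
    have htwin := hp.eq_add_two_of_dvd htm hdvd
    obtain ⟨hm3, hj3⟩ := hp.mod_three_of_add_two_eq htwin
    have h7 : 7 ≤ p m := by have := hp.five_le t; omega
    by_cases h3 : ∃ i ≠ m, (p i + 1) % p m = 3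
    · obtain ⟨i, him, hi⟩ := h3
      refine ⟨p m - 2, by omega, by omega, fun j hjm hj => ?_⟩
      have hij : i ≠ j := by rintro rfl; omega
      have hdvd : p m ∣ p i + p j + 1 := by
        have := Nat.mod_add_div (p i + 1) (p m)
        have := Nat.mod_add_div (p j + 1) (p m)
        exact ⟨(p i + 1) / p m + (p j + 1) / p m + 1, by rw [mul_add, mul_add]; omega⟩
      have := (Nat.prime_dvd_prime_iff_eq (hp.prime m) (hp.prime_add_add_one hij)).1 hdvd
      have := hj3 i him
      have := hj3 j hjm
      omega
    · push Not at h3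
      exact ⟨3, le_rfl, by omega, h3⟩
  · push Not at htwin
    refine ⟨p m - 1, by omega, by omega, fun j hjm hj => htwin j hjm ?_⟩
    have := Nat.mod_add_div (p j + 1) (p m)
    exact ⟨(p j + 1) / p m + 1, by rw [mul_add]; omega⟩

theorem admissibleTuple_extensionShifts (hp : GoodTuple p) {B : ℕ} (hB2 : ∀ m, B % p m = 2)
    (hB0 : ∀ ℓ, ℓ.Prime → ℓ ≤ k + 2 → (∀ m, p m ≠ ℓ) → ℓ ∣ B) :
    AdmissibleTuple (extensionShifts p B) := by
  refine admissibleTuple_of_forall_prime_le _ fun ℓ hℓ hle => ?_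
  simp only [extensionShifts, Fin.forall_fin_succ, Fin.cons_zero, Fin.cons_succ]
  by_cases hin : ∃ m, p m = ℓ
  · obtain ⟨m, rfl⟩ := hin
    obtain ⟨r, hr3, hrm, hr⟩ := hp.exists_avoided_residue m
    refine ⟨r, hrm, by rw [Nat.zero_mod]; omega, by rw [hB2]; omega, fun j => ?_⟩
    rcases eq_or_ne j m with rfl | hjm
    · rw [Nat.add_mod_left, Nat.mod_eq_of_lt (hp.prime j).one_lt]
      omega
    · exact hr j hjm
  · push Not at hin
    refine ⟨1, hℓ.one_lt, by simp, by simp [Nat.mod_eq_zero_of_dvd (hB0 ℓ hℓ hle hin)],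
      fun j hj => hin j ?_⟩
    have := Nat.mod_add_div (p j + 1) ℓ
    exact ((Nat.prime_dvd_prime_iff_eq hℓ (hp.prime j)).1 ⟨(p j + 1) / ℓ, by omega⟩).symm

theorem exists_forcing_shift (hp : GoodTuple p) :
    ∃ B, (∀ m, B % p m = 2) ∧ ∀ ℓ, ℓ.Prime → ℓ ≤ k + 2 → (∀ m, p m ≠ ℓ) → ℓ ∣ B := by
  classical
  obtain ⟨B, hB⟩ := Nat.exists_modEq_forall_prime_le (fun ℓ => if ∃ m, p m = ℓ then 2 else 0)
    (Finset.univ.sup p + k + 2)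
  refine ⟨B, fun m => ?_, fun ℓ hℓ hle hin => ?_⟩
  · have := Finset.le_sup (f := p) (Finset.mem_univ m)
    have hm := hB (p m) (hp.prime m) (by omega)
    rw [if_pos ⟨m, rfl⟩] at hm
    rw [hm, Nat.mod_eq_of_lt (by have := hp.five_le m; omega)]
  · have hℓB := hB ℓ hℓ (by omega)
    rw [if_neg (not_exists.2 hin)] at hℓB
    exact Nat.modEq_zero_iff_dvd.1 hℓB

theorem infinite_setOf_isGoodExtension (hDHL : DicksonHardyLittlewood) (hp : GoodTuple p) :
    {q | IsGoodExtension p q}.Infinite := by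
  obtain ⟨B, hB2, hB0⟩ := hp.exists_forcing_shift
  set M := Finset.univ.sup p + 3
  refine Set.Infinite.mono ?_ ((hDHL _ _ (hp.admissibleTuple_extensionShifts hB2 hB0)).sdiff
    (Set.finite_Iic M))
  rintro n ⟨hn, hnM⟩
  simp only [Set.mem_Iic, not_le] at hnM
  simp only [Set.mem_ofPred_eq, extensionShifts, Fin.forall_fin_succ, Fin.cons_zero,
    Fin.cons_succ] at hn
  obtain ⟨hn0, hnB, hnp⟩ := hn
  have hpn : ∀ i, p i < n := fun i => by
    have := Finset.le_sup (f := p) (Finset.mem_univ i)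
    omega
  refine ⟨by simpa using hn0, by omega, fun i => ⟨hpn i, ?_, ?_⟩⟩
  · convert hnp i using 1
    ring
  · exact Nat.not_dvd_add_two_of_prime_add (hB2 i) (hpn i) hnB

theorem snoc (hp : GoodTuple p) {q : ℕ} (hq : IsGoodExtension p q) :
    GoodTuple (Fin.snoc p q) := by
  obtain ⟨hq, hq3, hpq⟩ := hq
  refine ⟨fun i j hij => ?_, ?_, fun i j hij => ?_⟩
  · induction j using Fin.lastCases <;> induction i using Fin.lastCases <;>
      simp_all [hp.1.lt_iff_lt, (Fin.castSucc_lt_last _).not_gt]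
  · simpa [Fin.forall_fin_succ', hq, hq3] using hp.2.1
  · induction j using Fin.lastCases <;> induction i using Fin.lastCases <;>
      simp_all [hp.2.2, (Fin.castSucc_lt_last _).not_gt]

end GoodTuple

/-- Assuming Dickson–Hardy–Littlewood, any good `k`-tuple can be extended to a good
`(k+1)`-tuple by appending an element larger than the last one. -/
theorem goodTuple_extension (hDHL : DicksonHardyLittlewood) (k : ℕ) (hk : 1 ≤ k)
    (p : Fin k → ℕ) (hp : GoodTuple p) :
    ∃ q : ℕ, p ⟨k - 1, by omega⟩ < q ∧ GoodTuple (Fin.snoc p q) := by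
  obtain ⟨q, hq⟩ := (hp.infinite_setOf_isGoodExtension hDHL).nonempty
  exact ⟨q, (hq.2.2 _).1, hp.snoc hq⟩
end

section
/- Let (p_1,…,p_k) be a good k-tuple. Then the (k+2)-tuple (0, 2, p_1+1, …, p_k+1) is admissible. -/
/-- If `(p 0, …, p (k-1))` is a good `k`-tuple, then the `(k+2)`-tuple
`(0, 2, p 0 + 1, …, p (k-1) + 1)` is admissible. -/
theorem goodTuple_admissible_extension {k : ℕ} (p : Fin k → ℕ) (hp : GoodTuple p) :
    AdmissibleTuple
      (Fin.cons 0 (Fin.cons 2 (fun i : Fin k => p i + 1)) : Fin (k + 2) → ℕ) := by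
  obtain ⟨hmono, hprime, hcond⟩ := hp
  intro q hq
  have hodd : ∀ i, Odd (p i) := fun i =>
    (hprime i).1.odd_of_ne_two (by have := (hprime i).2; omega)
  rcases eq_or_ne q 2 with rfl | hq2
  · refine ⟨1, by norm_num, ?_⟩
    intro i
    refine Fin.cases ?_ (fun j => Fin.cases ?_ (fun l => ?_) j) i
    · simp
    · simp
    · simp only [Fin.cons_succ]
      obtain ⟨t, ht⟩ := hodd l
      omega
  rcases eq_or_ne q 3 with rfl | hq3
  · refine ⟨1, by norm_num, ?_⟩
    intro i
    refine Fin.cases ?_ (fun j => Fin.cases ?_ (fun l => ?_) j) i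
    · simp
    · simp
    · simp only [Fin.cons_succ]
      intro h
      have h3 : (3 : ℕ) ∣ p l := by omega
      have := (Nat.prime_dvd_prime_iff_eq (by norm_num) (hprime l).1).mp h3
      have := (hprime l).2
      omega
  -- now q ≥ 5
  have hq5 : 5 ≤ q := by
    have h2 := hq.two_le
    have h4 : q ≠ 4 := by rintro rfl; norm_num at hq
    omega
  by_contra hcon
  push_neg at hcon
  have key : ∀ r, r < q → r ≠ 0 → r ≠ 2 → ∃ i : Fin k, (p i + 1) % q = r := by
    intro r hr h0 h2
    obtain ⟨i, hi⟩ := hcon r hr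
    revert hi
    refine Fin.cases ?_ (fun j => Fin.cases ?_ (fun l => ?_) j) i
    · simp only [Fin.cons_zero, Nat.zero_mod]
      exact fun h => absurd h.symm h0
    · simp only [Fin.cons_succ, Fin.cons_zero]
      rw [Nat.mod_eq_of_lt (by omega)]
      exact fun h => absurd h.symm h2
    · simp only [Fin.cons_succ]
      exact fun h => ⟨l, h⟩
  rcases eq_or_ne q 5 with rfl | hq55
  · -- q = 5
    obtain ⟨m, hm⟩ := key 1 (by omega) (by norm_num) (by norm_num)
    obtain ⟨n, hn⟩ := key 4 (by omega) (by norm_num) (by norm_num)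
    have h5m : (5 : ℕ) ∣ p m := by omega
    have hpm : p m = 5 :=
      ((Nat.prime_dvd_prime_iff_eq (by norm_num) (hprime m).1).mp h5m).symm
    have h5n : (5 : ℕ) ∣ p n + 2 := by omega
    rcases lt_trichotomy m n with h | h | h
    · exact (hcond m n h).2 (hpm ▸ h5n)
    · subst h; omega
    · have := hmono h
      have := (hprime n).2
      omega
  · -- q ≥ 7
    have hq7 : 7 ≤ q := by
      have h6 : q ≠ 6 := by rintro rfl; norm_num at hq
      omega
    obtain ⟨i, hi⟩ := key 3 (by omega) (by norm_num) (by norm_num)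
    obtain ⟨j, hj⟩ := key (q - 2) (by omega) (by omega) (by omega)
    have hij : i ≠ j := by
      rintro rfl
      omega
    -- p i + 1 = a * q + 3, p j + 3 = b * q + q
    have hdivi := Nat.div_add_mod (p i + 1) q
    have hdivj := Nat.div_add_mod (p j + 1) q
    set a := (p i + 1) / q with ha
    set b := (p j + 1) / q with hb
    rw [hi] at hdivi
    rw [hj] at hdivj
    -- hdivi : q * a + 3 = p i + 1 ; hdivj : q * b + (q - 2) = p j + 1
    have hd : q ∣ p i + p j + 1 := ⟨a + b + 1, by
      have h1 : q * (a + b + 1) = q * a + q * b + q := by ring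
      omega⟩
    have hP : (p i + p j + 1).Prime := by
      rcases lt_or_gt_of_ne hij with h | h
      · exact (hcond i j h).1
      · have := (hcond j i h).1
        rwa [show p j + p i + 1 = p i + p j + 1 by ring] at this
    have heq : q = p i + p j + 1 :=
      (Nat.prime_dvd_prime_iff_eq hq hP).mp hd
    have hpi3 := (hprime i).2
    have ha1 : 1 ≤ a := by
      rcases Nat.eq_zero_or_pos a with h | h
      · rw [h] at hdivi; omega
      · omega
    have haq : q ≤ q * a := Nat.le_mul_of_pos_right q ha1
    omega
end

section
/- Let (X, μ) be a probability space and let E_1, E_2, E_3, … be a sequence of measurable events such that inf_i μ(E_i) > 0. Then there exists a set S = {i_1 < i_2 < …} of indices of positive upper density such that μ(E_{i_1} ∩ … ∩ E_{i_k}) > 0 for every k, i.e., every finite intersection of the events indexed by S has positive measure. -/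
/-!
Let `f n` be the proportion of the events `E 1, …, E n` containing a point. Each `f n` is bounded
by `1` and has integral at least `r = inf_i μ (E i)`, so by the reverse Fatou lemma
`∫ limsup f n ≥ r`, and `limsup f n x ≥ r` on a set of positive measure. Discard the null set of
points lying in some null finite intersection of the `E i`, which is a countable union of null
sets. For any remaining such point `x`, the set `{n | x ∈ E n}` has upper density at least `r`,
and each of its finite intersections contains `x`, hence is not null. Its increasing enumeration
is the required sequence.
-/

open MeasureTheory Filter Set
open scoped ENNReal

noncomputable def upperDensity (t : Set ℕ) : ℝ≥0∞ :=
  limsup (fun n : ℕ => (Nat.card ↥(t ∩ Icc 1 n) : ℝ≥0∞) / n) atTop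

lemma natCard_inter_Icc_le (t : Set ℕ) (n : ℕ) : Nat.card ↥(t ∩ Icc 1 n) ≤ n := by
  simpa [Nat.card_coe_set_eq] using
    ncard_le_ncard inter_subset_right (finite_Icc 1 n) |>.trans_eq (by simp)

lemma natCard_inter_Icc_div_le_one (t : Set ℕ) (n : ℕ) :
    (Nat.card ↥(t ∩ Icc 1 n) : ℝ≥0∞) / n ≤ 1 :=
  ENNReal.div_le_of_le_mul (by simpa using natCard_inter_Icc_le t n)

lemma upperDensity_le_one (t : Set ℕ) : upperDensity t ≤ 1 :=
  limsup_le_of_le (by isBoundedDefault) (.of_forall (natCard_inter_Icc_div_le_one t))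

lemma toReal_upperDensity (t : Set ℕ) :
    (upperDensity t).toReal = limsup (fun n : ℕ => (Nat.card ↥(t ∩ Icc 1 n) : ℝ) / n) atTop := by
  rw [upperDensity, ← ENNReal.limsup_toReal_eq ENNReal.one_ne_top
    (.of_forall (natCard_inter_Icc_div_le_one t))]
  simp

lemma Set.Finite.upperDensity_eq_zero {t : Set ℕ} (ht : t.Finite) : upperDensity t = 0 := by
  have hle (n : ℕ) : (Nat.card ↥(t ∩ Icc 1 n) : ℝ≥0∞) / n ≤ Nat.card t * (n : ℝ≥0∞)⁻¹ := by
    rw [div_eq_mul_inv]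
    gcongr
    simpa [Nat.card_coe_set_eq] using ncard_le_ncard inter_subset_left ht
  have hlim : Tendsto (fun n : ℕ => (Nat.card t : ℝ≥0∞) * (n : ℝ≥0∞)⁻¹) atTop (nhds 0) := by
    simpa using ENNReal.Tendsto.const_mul ENNReal.tendsto_inv_nat_nhds_zero (.inr (by simp))
  exact (tendsto_of_tendsto_of_tendsto_of_le_of_le tendsto_const_nhds hlim (fun _ ↦ zero_le)
    hle).limsup_eq

lemma infinite_of_upperDensity_pos {t : Set ℕ} (ht : 0 < upperDensity t) : t.Infinite :=
  fun hfin ↦ ht.ne' hfin.upperDensity_eq_zero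

lemma sum_indicator_one_apply_eq_natCard {α M : Type*} [AddCommMonoidWithOne M] (s : ℕ → Set α)
    (u : Finset ℕ) (x : α) :
    ∑ k ∈ u, (s k).indicator (1 : α → M) x = Nat.card ↥({k | x ∈ s k} ∩ ↑u) := by
  classical
  rw [show {k | x ∈ s k} ∩ ↑u = ↑(u.filter (x ∈ s ·)) by ext; simp [and_comm],
    Nat.card_coe_set_eq, ncard_coe_finset, Finset.natCast_card_filter]
  simp [indicator_apply]

lemma exists_null_forall_pos_measure_biInter {α ι : Type*} [MeasurableSpace α] [Countable ι]
    (μ : Measure α) (s : ι → Set α) :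
    ∃ N, μ N = 0 ∧ ∀ x ∉ N, ∀ u : Finset ι, (∀ i ∈ u, x ∈ s i) → 0 < μ (⋂ i ∈ u, s i) := by
  refine ⟨⋃ u : {u : Finset ι // μ (⋂ i ∈ u, s i) = 0}, ⋂ i ∈ u.1, s i,
    measure_iUnion_null fun u ↦ u.2, fun x hxN u hxu ↦ pos_iff_ne_zero.2 fun hu ↦ hxN ?_⟩
  exact mem_iUnion.2 ⟨⟨u, hu⟩, mem_iInter₂.2 hxu⟩

section Bergelson

variable {α : Type*} [MeasurableSpace α] {μ : Measure α}

lemma exists_notMem_null_div_le_limsup [IsFiniteMeasure μ] [NeZero μ] {r : ℝ≥0∞}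
    {f : ℕ → α → ℝ≥0∞} (hf : ∀ n, Measurable (f n)) (hf_le : ∀ n, f n ≤ 1)
    (hr : ∀ᶠ n in atTop, r ≤ ∫⁻ a, f n a ∂μ) {N : Set α} (hN : μ N = 0) :
    ∃ x ∉ N, r / μ univ ≤ limsup (f · x) atTop := by
  have hlimsup_fin : ∫⁻ x, limsup (f · x) atTop ∂μ ≠ ∞ :=
    ne_top_of_le_ne_top (measure_ne_top μ univ) <| lintegral_one (μ := μ) ▸ lintegral_mono
      fun x ↦ limsup_le_of_le (by isBoundedDefault) (.of_forall fun n ↦ hf_le n x)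
  obtain ⟨x, hxN, hx⟩ := exists_notMem_null_laverage_le (NeZero.ne μ) hlimsup_fin hN
  refine ⟨x, hxN, le_trans ?_ hx⟩
  -- `⨍⁻ a, g a ∂μ` is `∫⁻ a, g a ∂(μ univ)⁻¹ • μ`, so the second step is the reverse Fatou lemma.
  calc r / μ univ ≤ limsup (fun n ↦ ⨍⁻ a, f n a ∂μ) atTop :=
        le_limsup_of_frequently_le (hr.mono fun n hn ↦ by
          rw [laverage_eq]; exact ENNReal.div_le_div_right hn _).frequently (by isBoundedDefault)
    _ ≤ ⨍⁻ a, limsup (f · a) atTop ∂μ :=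
        limsup_lintegral_le 1 hf (fun n ↦ ae_of_all _ (hf_le n)) (by simp)

lemma le_lintegral_sum_indicator_div {r : ℝ≥0∞} {s : ℕ → Set α} (hs : ∀ n, MeasurableSet (s n))
    (hr : ∀ n, r ≤ μ (s n)) {n : ℕ} (hn : n ≠ 0) :
    r ≤ ∫⁻ x, (∑ k ∈ Finset.Icc 1 n, (s k).indicator 1 x) / n ∂μ := by
  simp_rw [div_eq_mul_inv]
  rw [lintegral_mul_const _ (by fun_prop (disch := exact hs _)),
    lintegral_finsetSum _ fun k _ ↦ by fun_prop (disch := exact hs k)]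
  simp only [lintegral_indicator_one (hs _)]
  rw [← div_eq_mul_inv, ENNReal.le_div_iff_mul_le (.inl (by simpa using hn)) (.inl (by simp)),
    mul_comm]
  simpa using Finset.card_nsmul_le_sum (Finset.Icc 1 n) _ _ fun k _ ↦ hr k

theorem strong_bergelson [IsFiniteMeasure μ] [NeZero μ] {r : ℝ≥0∞} {s : ℕ → Set α}
    (hs : ∀ n, MeasurableSet (s n)) (hr : ∀ n, r ≤ μ (s n)) :
    ∃ t : Set ℕ, r / μ univ ≤ upperDensity t ∧ ∀ u : Finset ℕ, ↑u ⊆ t → 0 < μ (⋂ n ∈ u, s n) := by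
  obtain ⟨N, hN, hpos⟩ := exists_null_forall_pos_measure_biInter μ s
  have hf_eq (n : ℕ) (x : α) : (∑ k ∈ Finset.Icc 1 n, (s k).indicator 1 x) / (n : ℝ≥0∞) =
      (Nat.card ↥({k | x ∈ s k} ∩ Icc 1 n) : ℝ≥0∞) / n := by
    rw [sum_indicator_one_apply_eq_natCard, Finset.coe_Icc]
  obtain ⟨x, hxN, hx⟩ := exists_notMem_null_div_le_limsup (μ := μ)
    (f := fun n x ↦ (∑ k ∈ Finset.Icc 1 n, (s k).indicator 1 x) / (n : ℝ≥0∞))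
    (fun n ↦ by fun_prop (disch := exact hs _))
    (fun n x ↦ (hf_eq n x).trans_le (natCard_inter_Icc_div_le_one _ n))
    (eventually_ne_atTop 0 |>.mono fun n hn ↦ le_lintegral_sum_indicator_div hs hr hn) hN
  refine ⟨{k | x ∈ s k}, ?_, fun u hu ↦ hpos x hxN u fun k hk ↦ hu hk⟩
  simpa only [upperDensity, hf_eq] using hx

end Bergelson

/-- Bergelson's intersectivity lemma: if `E 0, E 1, E 2, …` are events in a probability
space with `inf_i μ(E i) > 0`, then there is a strictly increasing sequence of indices,
whose range has positive upper density, all of whose finite (initial) intersections have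
positive measure. -/
theorem bergelson_intersectivity {X : Type*} [MeasurableSpace X] (μ : Measure X)
    [IsProbabilityMeasure μ] (E : ℕ → Set X) (hE : ∀ n, MeasurableSet (E n))
    (hinf : 0 < ⨅ n, μ (E n)) :
    ∃ i : ℕ → ℕ, StrictMono i ∧
      0 < Filter.limsup
        (fun n : ℕ => (Nat.card ↥(Set.range i ∩ Set.Icc 1 n) : ℝ) / n) Filter.atTop ∧
      ∀ k : ℕ, 0 < μ (⋂ r ∈ Finset.range k, E (i r)) := by
  obtain ⟨t, ht_dens, ht_pos⟩ := strong_bergelson hE fun n ↦ iInf_le (fun n ↦ μ (E n)) n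
  rw [measure_univ, div_one] at ht_dens
  have ht_dens_pos : 0 < upperDensity t := hinf.trans_le ht_dens
  have ht_inf : t.Infinite := infinite_of_upperDensity_pos ht_dens_pos
  have hrange : range (Nat.nth (· ∈ t)) = t := Nat.range_nth_of_infinite ht_inf
  refine ⟨Nat.nth (· ∈ t), Nat.nth_strictMono ht_inf, ?_, fun k ↦ ?_⟩
  · rw [hrange, ← toReal_upperDensity]
    exact ENNReal.toReal_pos ht_dens_pos.ne' (ne_top_of_le_ne_top ENNReal.one_ne_top
      (upperDensity_le_one t))
  · classical
    rw [← Finset.set_biInter_finset_image]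
    exact ht_pos _ (by rw [Finset.coe_image]; exact (image_subset_range _ _).trans hrange.subset)
end

section
/- Assume the Dickson–Hardy–Littlewood conjecture. Then the primes contain the sumset of two infinite sets: there exist infinite sets A and B of natural numbers such that a + b is prime for every a ∈ A and b ∈ B. -/
lemma admissible_of_witness {k : ℕ} (h : Fin k → ℕ) (b : ℕ) (hkb : k ≤ b)
    (h1 : ∀ i, 1 ≤ h i) (hp : ∀ i, Nat.Prime (h i + b)) : AdmissibleTuple h := by
  intro p pp
  rcases le_or_gt p k with hpk | hkp
  · refine ⟨(p - b % p) % p, Nat.mod_lt _ pp.pos, ?_⟩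
    intro i hi
    have hdvd : p ∣ h i + b := by
      apply Nat.dvd_of_mod_eq_zero
      rw [Nat.add_mod, hi]
      rcases Nat.eq_zero_or_pos (b % p) with h0 | h0
      · simp [h0, Nat.mod_self]
      · have hbp : b % p < p := Nat.mod_lt _ pp.pos
        have hlt : p - b % p < p := by omega
        rw [Nat.mod_eq_of_lt hlt]
        have heq : p - b % p + b % p = p := by omega
        rw [heq, Nat.mod_self]
    rcases (hp i).eq_one_or_self_of_dvd p hdvd with h | h
    · exact pp.ne_one h
    · have := h1 i
      omega
  · have hns : ¬ Function.Surjective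
        (fun i : Fin k => (⟨h i % p, Nat.mod_lt _ pp.pos⟩ : Fin p)) := by
      intro hs
      have := Fintype.card_le_of_surjective _ hs
      simp only [Fintype.card_fin] at this
      omega
    rw [Function.Surjective] at hns
    push_neg at hns
    obtain ⟨r, hr⟩ := hns
    exact ⟨r.1, r.2, fun i hi => hr i (Fin.ext hi)⟩

def Good (A B : Finset ℕ) : Prop :=
  (∀ a ∈ A, ∀ b ∈ B, Nat.Prime (a + b)) ∧
  (∀ x ∈ A, 1 ≤ x) ∧ (∀ x ∈ B, 1 ≤ x) ∧
  (∃ a ∈ A, A.card + B.card ≤ a) ∧ (∃ b ∈ B, A.card + B.card ≤ b)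

lemma extend (hDHL : DicksonHardyLittlewood) (A B : Finset ℕ) (hg : Good A B) :
    ∃ C D : Finset ℕ, A ⊆ C ∧ B ⊆ D ∧ Good C D ∧ A.card < C.card ∧ B.card < D.card := by
  obtain ⟨hprime, hA1, hB1, ⟨a₀, ha₀A, ha₀⟩, ⟨b₀, hb₀B, hb₀⟩⟩ := hg
  have hkpos : 1 ≤ A.card := Finset.card_pos.2 ⟨a₀, ha₀A⟩
  have hlpos : 1 ≤ B.card := Finset.card_pos.2 ⟨b₀, hb₀B⟩
  -- tuple enumerating A
  set h : Fin A.card → ℕ := fun i => ((A.equivFin.symm i : A) : ℕ) with hdef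
  have hmem : ∀ i, h i ∈ A := fun i => (A.equivFin.symm i).2
  have hsurj : ∀ a ∈ A, ∃ i, h i = a := by
    intro a ha
    exact ⟨A.equivFin ⟨a, ha⟩, by simp [hdef]⟩
  have adm : AdmissibleTuple h :=
    admissible_of_witness h b₀ (by omega) (fun i => hA1 _ (hmem i))
      (fun i => hprime _ (hmem i) _ hb₀B)
  obtain ⟨b', hb'S, hb'gt⟩ := (hDHL _ h adm).exists_gt
    ((A ∪ B).sup id + A.card + B.card + 2)
  have hb'p : ∀ i, Nat.Prime (b' + h i) := hb'S
  have hb'nB : b' ∉ B := by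
    intro hmem'
    have : b' ≤ (A ∪ B).sup id := Finset.le_sup (f := id) (Finset.mem_union_right _ hmem')
    omega
  set D := insert b' B with hD
  have hDcard : D.card = B.card + 1 := Finset.card_insert_of_notMem hb'nB
  have hcrossAD : ∀ a ∈ A, ∀ b ∈ D, Nat.Prime (a + b) := by
    intro a ha b hb
    rcases Finset.mem_insert.1 hb with rfl | hb
    · obtain ⟨i, rfl⟩ := hsurj a ha
      rw [Nat.add_comm]
      exact hb'p i
    · exact hprime a ha b hb
  -- tuple enumerating D
  set h2 : Fin D.card → ℕ := fun j => ((D.equivFin.symm j : D) : ℕ) with h2def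
  have h2mem : ∀ j, h2 j ∈ D := fun j => (D.equivFin.symm j).2
  have h2surj : ∀ b ∈ D, ∃ j, h2 j = b := by
    intro b hb
    exact ⟨D.equivFin ⟨b, hb⟩, by simp [h2def]⟩
  have hD1 : ∀ x ∈ D, 1 ≤ x := by
    intro x hx
    rcases Finset.mem_insert.1 hx with rfl | hx
    · omega
    · exact hB1 x hx
  have adm2 : AdmissibleTuple h2 := by
    refine admissible_of_witness h2 a₀ (by omega) (fun j => hD1 _ (h2mem j)) ?_
    intro j
    rw [Nat.add_comm]
    exact hcrossAD a₀ ha₀A _ (h2mem j)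
  obtain ⟨a', ha'S, ha'gt⟩ := (hDHL _ h2 adm2).exists_gt
    ((A ∪ D).sup id + A.card + D.card + 2)
  have ha'p : ∀ j, Nat.Prime (a' + h2 j) := ha'S
  have ha'nA : a' ∉ A := by
    intro hmem'
    have : a' ≤ (A ∪ D).sup id := Finset.le_sup (f := id) (Finset.mem_union_left _ hmem')
    omega
  set C := insert a' A with hC
  have hCcard : C.card = A.card + 1 := Finset.card_insert_of_notMem ha'nA
  refine ⟨C, D, Finset.subset_insert _ _, Finset.subset_insert _ _, ?_, by omega, by omega⟩
  refine ⟨?_, ?_, hD1, ⟨a', Finset.mem_insert_self _ _, by omega⟩,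
    ⟨b', Finset.mem_insert_self _ _, by omega⟩⟩
  · intro a ha b hb
    rcases Finset.mem_insert.1 ha with rfl | ha
    · obtain ⟨j, rfl⟩ := h2surj b hb
      exact ha'p j
    · exact hcrossAD a ha b hb
  · intro x hx
    rcases Finset.mem_insert.1 hx with rfl | hx
    · omega
    · exact hA1 x hx

noncomputable def chain (hDHL : DicksonHardyLittlewood) :
    ℕ → {p : Finset ℕ × Finset ℕ // Good p.1 p.2}
  | 0 => ⟨({2}, {3}), by
      refine ⟨?_, ?_, ?_, ⟨2, by simp, by simp⟩, ⟨3, by simp, by simp⟩⟩ <;>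
        simp +decide⟩
  | n + 1 =>
    let prev := chain hDHL n
    let e := extend hDHL prev.1.1 prev.1.2 prev.2
    ⟨(e.choose, e.choose_spec.choose), e.choose_spec.choose_spec.2.2.1⟩

lemma chain_subset (hDHL : DicksonHardyLittlewood) (n : ℕ) :
    (chain hDHL n).1.1 ⊆ (chain hDHL (n+1)).1.1 ∧
    (chain hDHL n).1.2 ⊆ (chain hDHL (n+1)).1.2 ∧
    (chain hDHL n).1.1.card < (chain hDHL (n+1)).1.1.card ∧
    (chain hDHL n).1.2.card < (chain hDHL (n+1)).1.2.card := by
  have hs := (extend hDHL (chain hDHL n).1.1 (chain hDHL n).1.2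
    (chain hDHL n).2).choose_spec.choose_spec
  exact ⟨hs.1, hs.2.1, hs.2.2.2.1, hs.2.2.2.2⟩

lemma chain_mono (hDHL : DicksonHardyLittlewood) {m n : ℕ} (hmn : m ≤ n) :
    (chain hDHL m).1.1 ⊆ (chain hDHL n).1.1 ∧ (chain hDHL m).1.2 ⊆ (chain hDHL n).1.2 := by
  induction n with
  | zero => simp_all
  | succ n ih =>
    rcases Nat.lt_or_ge m (n+1) with hlt | hge
    · have := ih (by omega)
      exact ⟨this.1.trans (chain_subset hDHL n).1, this.2.trans (chain_subset hDHL n).2.1⟩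
    · have : m = n + 1 := by omega
      subst this
      exact ⟨subset_rfl, subset_rfl⟩

lemma chain_card (hDHL : DicksonHardyLittlewood) (n : ℕ) :
    n + 1 ≤ (chain hDHL n).1.1.card ∧ n + 1 ≤ (chain hDHL n).1.2.card := by
  induction n with
  | zero => constructor <;> simp [chain]
  | succ n ih =>
    have h1 := (chain_subset hDHL n).2.2.1
    have h2 := (chain_subset hDHL n).2.2.2
    omega

/-- Assuming Dickson–Hardy–Littlewood, the primes contain the sumset of two infinite
sets of natural numbers. -/
theorem primes_contain_infinite_sumset (hDHL : DicksonHardyLittlewood) :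
    ∃ A B : Set ℕ, A.Infinite ∧ B.Infinite ∧
      ∀ a ∈ A, ∀ b ∈ B, Nat.Prime (a + b) := by
  refine ⟨⋃ n, ((chain hDHL n).1.1 : Set ℕ), ⋃ n, ((chain hDHL n).1.2 : Set ℕ), ?_, ?_, ?_⟩
  · intro hfin
    set n := hfin.toFinset.card with hn
    have hsub : (chain hDHL n).1.1 ⊆ hfin.toFinset := by
      intro x hx
      exact hfin.mem_toFinset.2 (Set.mem_iUnion.2 ⟨n, hx⟩)
    have := Finset.card_le_card hsub
    have := (chain_card hDHL n).1
    omega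
  · intro hfin
    set n := hfin.toFinset.card with hn
    have hsub : (chain hDHL n).1.2 ⊆ hfin.toFinset := by
      intro x hx
      exact hfin.mem_toFinset.2 (Set.mem_iUnion.2 ⟨n, hx⟩)
    have hle := Finset.card_le_card hsub
    have := (chain_card hDHL n).2
    omega
  · intro a ha b hb
    obtain ⟨m, hm⟩ := Set.mem_iUnion.1 ha
    obtain ⟨m', hm'⟩ := Set.mem_iUnion.1 hb
    have h1 := (chain_mono hDHL (le_max_left m m')).1 hm
    have h2 := (chain_mono hDHL (le_max_right m m')).2 hm'
    exact (chain hDHL (max m m')).2.1 a h1 b h2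
end
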